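/- ∑_{k=1}^{∞} ( (−2)^{k−1}/k! + (−2)^k/(k+2)! ) = (1 − e^{−2})/4. -/

import Mathlib

open MeasureTheory

inductive BTree : Type
  | nil : BTree
  | node : BTree → BTree → BTree
deriving DecidableEq

namespace BTree

instance : MeasurableSpace BTree := ⊤

def size : BTree → ℕ
  | nil => 0
  | node l r => size l + size r + 1

def left : BTree → BTree
  | nil => nil
  | node l _ => l

def right : BTree → BTree
  | nil => nil
  | node _ r => r

/-- The number of maximal green nodes (green = outdegree ≤ 1, maximal = no green
strict ancestor): a green root gives the unique maximal green node. -/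
def F : BTree → ℕ
  | nil => 0
  | node l r => if l = nil ∨ r = nil then 1 else F l + F r

/-- The toll function `f(T) = F(T) - F(T_L) - F(T_R)`. -/
def f : BTree → ℤ
  | nil => 0
  | node nil r => 1 - F r
  | node l nil => 1 - F l
  | node _ _ => 0

/-- The list of all subtrees `T_v` rooted at nodes `v` of `T`. -/
def subtrees : BTree → List BTree
  | nil => []
  | node l r => node l r :: (subtrees l ++ subtrees r)

/-- The root is green: the tree is nonempty and has at most one root child. -/
def greenRoot : BTree → Prop
  | nil => False
  | node l r => l = nil ∨ r = nil

instance : DecidablePred greenRoot := fun t => by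
  cases t <;> simp [greenRoot] <;> infer_instance

/-- The random binary search tree with `n` nodes. -/
noncomputable def bst : ℕ → PMF BTree
  | 0 => PMF.pure nil
  | n + 1 =>
    (PMF.uniformOfFintype (Fin (n + 1))).bind fun i =>
      (bst i.val).bind fun l => (bst (n - i.val)).bind fun r => PMF.pure (node l r)
  decreasing_by
    · exact i.isLt
    · omega

/-- `fchain k T` is the number of green chains of length `k` in `T` starting at the root. -/
def fchain : ℕ → BTree → ℕ
  | 0, _ => 0
  | 1, nil => 0
  | 1, node l r => if l = nil ∨ r = nil then 1 else 0
  | _ + 2, nil => 0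
  | k + 2, node l r =>
    if l = nil ∨ r = nil then
      ((subtrees l).map (fun t => fchain (k + 1) t)).sum
        + ((subtrees r).map (fun t => fchain (k + 1) t)).sum
    else 0
  termination_by k _ => k

/-- `Fchain k T` is the total number of green chains of length `k` in `T`. -/
def Fchain (k : ℕ) (T : BTree) : ℕ := ((subtrees T).map (fchain k)).sum

end BTree

theorem Real.hasSum_pow_div_factorial_add {x : ℝ} (hx : x ≠ 0) (m : ℕ) :
    HasSum (fun k : ℕ => x ^ k / ((k + m).factorial : ℝ))
      ((Real.exp x - ∑ i ∈ Finset.range m, x ^ i / (i.factorial : ℝ)) / x ^ m) := by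
  have hexp : HasSum (fun n : ℕ => x ^ n / (n.factorial : ℝ)) (Real.exp x) := by
    rw [Real.exp_eq_exp_ℝ]
    exact NormedSpace.expSeries_div_hasSum_exp x
  refine ((hasSum_nat_add_iff' m).mpr hexp).div_const (x ^ m) |>.congr_fun fun k => ?_
  field_simp
  ring

/-- `∑_{k=1}^∞ ((−2)^{k−1}/k! + (−2)^k/(k+2)!) = (1 − e^{−2})/4`. -/
theorem series_identity :
    ∑' k : ℕ, ((-2 : ℝ) ^ k / (Nat.factorial (k + 1) : ℝ)
        + (-2 : ℝ) ^ (k + 1) / (Nat.factorial (k + 3) : ℝ))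
      = (1 - Real.exp (-2)) / 4 := by
  have h₁ := Real.hasSum_pow_div_factorial_add (x := -2) (by norm_num) 1
  have h₃ : HasSum (fun k : ℕ => (-2 : ℝ) ^ (k + 1) / ((k + 3).factorial : ℝ)) _ :=
    ((Real.hasSum_pow_div_factorial_add (x := -2) (by norm_num) 3).mul_left (-2)).congr_fun
      fun k => by ring
  rw [(h₁.add h₃).tsum_eq]
  norm_num [Finset.sum_range_succ]
  ring
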